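/- Let M : [0,∞) → ℝ be continuous and let λ ∈ ℝ. Then for every t ≥ 0, ∫_0^t e^{-λ(t-s)} |K_M(t,s)| ds ≤ exp( t ∫_0^t e^{-λτ} |M(τ)| dτ ) − 1, where K_M(t,s) := ∑_{j=1}^∞ ((-s)^j / j!) M^{*j}(t-s). -/

import Mathlib

open Set MeasureTheory

/-- Convolution on `[0,∞)` (via signed interval integral): `(f*g)(t) = ∫_0^t f(t-s) g(s) ds`. -/
noncomputable def conv (f g : ℝ → ℝ) : ℝ → ℝ :=
  fun t => ∫ s in (0:ℝ)..t, f (t - s) * g s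

/-- `j`-fold convolution power of `M`, with the conventions `M^{*0} = 0` and `M^{*1} = M`. -/
noncomputable def convPow (M : ℝ → ℝ) : ℕ → ℝ → ℝ
  | 0 => fun _ => 0
  | 1 => M
  | (j+2) => conv M (convPow M (j+1))

/-- The norm `‖f‖_{C^k([0,t])} = ∑_{l=0}^k max_{0 ≤ τ ≤ t} |f^{(l)}(τ)|`,
derivatives taken within `[0,∞)`. -/
noncomputable def CkNorm (k : ℕ) (t : ℝ) (f : ℝ → ℝ) : ℝ :=
  ∑ l ∈ Finset.range (k+1), ⨆ τ : Set.Icc (0:ℝ) t, |iteratedDerivWithin l f (Set.Ici 0) τ|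

/-- The flow kernel `K_M(t,s) = ∑_{j≥1} ((-s)^j / j!) M^{*j}(t-s)`. -/
noncomputable def KM (M : ℝ → ℝ) (t s : ℝ) : ℝ :=
  ∑' j : ℕ, ((-s) ^ j / (j.factorial : ℝ)) * convPow M j (t - s)

/-!
The weight `e^{-λx}` is multiplicative, so it passes through convolutions:
`(e^{-λ·} M)^{*j}(τ) = e^{-λτ} M^{*j}(τ)`, and the weighted estimate is the unweighted one
for `e^{-λx} M(x)`. For the unweighted estimate, Young's inequality on `[0, t]` gives
`∫_0^t |M^{*j}| ≤ a^j` with `a = ∫_0^t |M|`; since `|s^j / j!| ≤ t^j / j!` on `[0, t]`, the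
`j`-th term of `K_M(t, ·)` has `L¹` norm at most `(t a)^j / j!`, and summing over `j ≥ 1`
gives `e^{t a} - 1`. Working with lower Lebesgue integrals makes the exchange of sum and
integral (and the use of Tonelli in Young's inequality) free of integrability conditions.
-/

open scoped ENNReal

theorem lintegral_lconvolution {G : Type*} [MeasurableSpace G] [AddGroup G]
    [MeasurableAdd₂ G] [MeasurableNeg G] {μ : Measure G} [SFinite μ] [μ.IsAddLeftInvariant]
    {f g : G → ℝ≥0∞} (hf : Measurable f) (hg : Measurable g) :
    ∫⁻ x, (f ⋆ₗ[μ] g) x ∂μ = (∫⁻ x, f x ∂μ) * ∫⁻ x, g x ∂μ := by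
  simp_rw [lconvolution_def]
  rw [lintegral_lintegral_swap (by fun_prop)]
  have inner (y : G) : ∫⁻ x, f y * g (-y + x) ∂μ = f y * ∫⁻ x, g x ∂μ := by
    rw [lintegral_const_mul _ (by fun_prop), lintegral_add_left_eq_self]
  simp_rw [inner, lintegral_mul_const _ hf]

theorem setLIntegral_Icc_comp_sub_left (f : ℝ → ℝ≥0∞) (t : ℝ) :
    ∫⁻ s in Icc 0 t, f (t - s) = ∫⁻ s in Icc 0 t, f s := by
  have h := (Measure.measurePreserving_sub_left volume t).setLIntegral_comp_preimage_emb
    (Homeomorph.subLeft t).measurableEmbedding f (Icc 0 t)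
  rwa [preimage_const_sub_Icc, sub_self, sub_zero] at h

theorem hasSum_pow_succ_div_factorial (x : ℝ) :
    HasSum (fun n => x ^ (n + 1) / (n + 1).factorial) (Real.exp x - 1) := by
  have h := (hasSum_nat_add_iff' 1).2 (NormedSpace.expSeries_div_hasSum_exp x)
  simpa [← Real.exp_eq_exp_ℝ] using h

theorem continuous_conv {f g : ℝ → ℝ} (hf : Continuous f) (hg : Continuous g) :
    Continuous (conv f g) :=
  intervalIntegral.continuous_parametric_intervalIntegral_of_continuous
    (by fun_prop) continuous_id

theorem continuous_convPow {M : ℝ → ℝ} (hM : Continuous M) : ∀ j, Continuous (convPow M j)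
  | 0 => continuous_const
  | 1 => hM
  | j + 2 => continuous_conv hM (continuous_convPow hM (j + 1))

theorem convPow_exp_mul (M : ℝ → ℝ) (c τ : ℝ) :
    ∀ j, convPow (fun x => Real.exp (c * x) * M x) j τ = Real.exp (c * τ) * convPow M j τ
  | 0 => by simp [convPow]
  | 1 => rfl
  | j + 2 => by
    show ∫ s in (0:ℝ)..τ, _ = Real.exp (c * τ) * ∫ s in (0:ℝ)..τ, _
    rw [← intervalIntegral.integral_const_mul]
    refine intervalIntegral.integral_congr fun s _ => ?_
    simp only [convPow_exp_mul M c s (j + 1)]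
    rw [show c * τ = c * (τ - s) + c * s by ring, Real.exp_add]
    ring

theorem convPow_congr {M M' : ℝ → ℝ} (h : EqOn M M' (Ici 0)) :
    ∀ j {τ : ℝ}, 0 ≤ τ → convPow M j τ = convPow M' j τ
  | 0, _, _ => rfl
  | 1, _, hτ => h hτ
  | j + 2, τ, hτ => by
    show ∫ s in (0:ℝ)..τ, _ = ∫ s in (0:ℝ)..τ, _
    refine intervalIntegral.integral_congr fun s hs => ?_
    rw [uIcc_of_le hτ] at hs
    simp only [h (show 0 ≤ τ - s by linarith [hs.2]), convPow_congr h (j + 1) hs.1]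

theorem KM_exp_mul (M : ℝ → ℝ) (c t s : ℝ) :
    KM (fun x => Real.exp (c * x) * M x) t s = Real.exp (c * (t - s)) * KM M t s := by
  simp only [KM, convPow_exp_mul, ← tsum_mul_left]
  congr 1 with j
  ring

theorem KM_congr {M M' : ℝ → ℝ} (h : EqOn M M' (Ici 0)) {t s : ℝ} (hst : s ≤ t) :
    KM M t s = KM M' t s := by
  simp only [KM, convPow_congr h _ (sub_nonneg.2 hst)]

theorem enorm_conv_le_lconvolution {f g : ℝ → ℝ} {t τ : ℝ} (hτ : τ ∈ Icc 0 t) :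
    ‖conv f g τ‖ₑ ≤ ((Icc 0 t).indicator (‖g ·‖ₑ) ⋆ₗ (Icc 0 t).indicator (‖f ·‖ₑ)) τ := by
  calc ‖conv f g τ‖ₑ
      ≤ ∫⁻ s in Ioc 0 τ, ‖f (τ - s) * g s‖ₑ := by
        rw [conv, intervalIntegral.integral_of_le hτ.1]
        exact enorm_integral_le_lintegral_enorm _
    _ ≤ _ := by
      rw [lconvolution_def, ← lintegral_indicator measurableSet_Ioc]
      refine lintegral_mono fun s => ?_
      by_cases hs : s ∈ Ioc 0 τ
      · have hs' : s ∈ Icc 0 t := ⟨hs.1.le, hs.2.trans hτ.2⟩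
        have hτs : -s + τ ∈ Icc 0 t := ⟨by linarith [hs.2], by linarith [hs.1, hτ.2]⟩
        rw [indicator_of_mem hs, indicator_of_mem hs', indicator_of_mem hτs, enorm_mul,
          mul_comm, neg_add_eq_sub]
      · simp [indicator_of_notMem hs]

theorem lintegral_enorm_conv_le {f g : ℝ → ℝ} (hf : Measurable f) (hg : Measurable g) (t : ℝ) :
    ∫⁻ τ in Icc 0 t, ‖conv f g τ‖ₑ ≤
      (∫⁻ τ in Icc 0 t, ‖f τ‖ₑ) * ∫⁻ τ in Icc 0 t, ‖g τ‖ₑ := by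
  set F := (Icc 0 t).indicator (‖f ·‖ₑ)
  set G := (Icc 0 t).indicator (‖g ·‖ₑ)
  calc ∫⁻ τ in Icc 0 t, ‖conv f g τ‖ₑ
      ≤ ∫⁻ τ in Icc 0 t, (G ⋆ₗ F) τ :=
        setLIntegral_mono' measurableSet_Icc fun τ hτ => enorm_conv_le_lconvolution hτ
    _ ≤ ∫⁻ τ, (G ⋆ₗ F) τ := setLIntegral_le_lintegral _ _
    _ = (∫⁻ τ, G τ) * ∫⁻ τ, F τ :=
        lintegral_lconvolution (hg.enorm.indicator measurableSet_Icc)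
          (hf.enorm.indicator measurableSet_Icc)
    _ = _ := by
      rw [lintegral_indicator measurableSet_Icc, lintegral_indicator measurableSet_Icc, mul_comm]

theorem lintegral_enorm_convPow_le {M : ℝ → ℝ} (hM : Continuous M) (t : ℝ) :
    ∀ j, ∫⁻ τ in Icc 0 t, ‖convPow M j τ‖ₑ ≤ (∫⁻ τ in Icc 0 t, ‖M τ‖ₑ) ^ j
  | 0 => by simp [convPow]
  | 1 => by simp [convPow]
  | j + 2 =>
    calc ∫⁻ τ in Icc 0 t, ‖convPow M (j + 2) τ‖ₑ
        ≤ (∫⁻ τ in Icc 0 t, ‖M τ‖ₑ) * ∫⁻ τ in Icc 0 t, ‖convPow M (j + 1) τ‖ₑ :=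
          lintegral_enorm_conv_le hM.measurable (continuous_convPow hM _).measurable t
      _ ≤ (∫⁻ τ in Icc 0 t, ‖M τ‖ₑ) * (∫⁻ τ in Icc 0 t, ‖M τ‖ₑ) ^ (j + 1) := by
          gcongr; exact lintegral_enorm_convPow_le hM t (j + 1)
      _ = (∫⁻ τ in Icc 0 t, ‖M τ‖ₑ) ^ (j + 2) := (pow_succ' _ _).symm

theorem lintegral_enorm_KM_term_le {M : ℝ → ℝ} (hM : Continuous M) (t : ℝ) (j : ℕ) :
    ∫⁻ s in Icc 0 t, ‖(-s) ^ j / (j.factorial : ℝ) * convPow M j (t - s)‖ₑ ≤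
      ENNReal.ofReal (t ^ j / j.factorial) * (∫⁻ τ in Icc 0 t, ‖M τ‖ₑ) ^ j := by
  have hcoeff (s : ℝ) (hs : s ∈ Icc 0 t) :
      ‖(-s) ^ j / (j.factorial : ℝ)‖ₑ ≤ ENNReal.ofReal (t ^ j / j.factorial) := by
    rw [Real.enorm_eq_ofReal_abs, abs_div, abs_pow, abs_neg, abs_of_nonneg hs.1, Nat.abs_cast]
    gcongr
    exacts [hs.1, hs.2]
  calc ∫⁻ s in Icc 0 t, ‖(-s) ^ j / (j.factorial : ℝ) * convPow M j (t - s)‖ₑ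
      ≤ ∫⁻ s in Icc 0 t, ENNReal.ofReal (t ^ j / j.factorial) * ‖convPow M j (t - s)‖ₑ :=
        setLIntegral_mono' measurableSet_Icc fun s hs => by
          rw [enorm_mul]; gcongr; exact hcoeff s hs
    _ = ENNReal.ofReal (t ^ j / j.factorial) * ∫⁻ s in Icc 0 t, ‖convPow M j s‖ₑ := by
        rw [lintegral_const_mul' _ _ ENNReal.ofReal_ne_top,
          setLIntegral_Icc_comp_sub_left (‖convPow M j ·‖ₑ)]
    _ ≤ _ := by gcongr; exact lintegral_enorm_convPow_le hM t j

theorem lintegral_enorm_KM_le {M : ℝ → ℝ} (hM : Continuous M) {t : ℝ} (ht : 0 ≤ t) :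
    ∫⁻ s in Icc 0 t, ‖KM M t s‖ₑ ≤
      ENNReal.ofReal (Real.exp (t * ∫ τ in (0:ℝ)..t, |M τ|) - 1) := by
  set a := ∫ τ in (0:ℝ)..t, |M τ|
  have ha : 0 ≤ a := intervalIntegral.integral_nonneg ht fun _ _ => abs_nonneg _
  have hA : ∫⁻ τ in Icc 0 t, ‖M τ‖ₑ = ENNReal.ofReal a := by
    rw [← ofReal_integral_norm_eq_lintegral_enorm hM.integrableOn_Icc,
      integral_Icc_eq_integral_Ioc, ← intervalIntegral.integral_of_le ht]
    rfl
  set u : ℕ → ℝ → ℝ := fun j s => (-s) ^ j / (j.factorial : ℝ) * convPow M j (t - s)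
  have hu_meas (j : ℕ) : AEMeasurable (fun s => ‖u j s‖ₑ) (volume.restrict (Icc 0 t)) := by
    have := continuous_convPow hM j
    exact (Continuous.measurable (by fun_prop)).enorm.aemeasurable
  have hu (j : ℕ) : ∫⁻ s in Icc 0 t, ‖u (j + 1) s‖ₑ ≤
      ENNReal.ofReal ((t * a) ^ (j + 1) / (j + 1).factorial) := by
    refine (lintegral_enorm_KM_term_le hM t (j + 1)).trans_eq ?_
    rw [hA, ← ENNReal.ofReal_pow ha, ← ENNReal.ofReal_mul (by positivity)]
    ring_nf
  calc ∫⁻ s in Icc 0 t, ‖KM M t s‖ₑ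
      ≤ ∫⁻ s in Icc 0 t, ∑' j, ‖u j s‖ₑ := lintegral_mono fun _ => enorm_tsum_le_tsum_enorm
    _ = ∑' j, ∫⁻ s in Icc 0 t, ‖u (j + 1) s‖ₑ := by
        rw [lintegral_tsum hu_meas, tsum_eq_zero_add' ENNReal.summable]
        simp [u, convPow]
    _ ≤ ∑' j, ENNReal.ofReal ((t * a) ^ (j + 1) / (j + 1).factorial) := ENNReal.tsum_le_tsum hu
    _ = ENNReal.ofReal (Real.exp (t * a) - 1) := by
        rw [← ENNReal.ofReal_tsum_of_nonneg (fun n => by positivity)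
          (hasSum_pow_succ_div_factorial _).summable, (hasSum_pow_succ_div_factorial _).tsum_eq]

theorem integral_abs_KM_le {M : ℝ → ℝ} (hM : Continuous M) {t : ℝ} (ht : 0 ≤ t) :
    ∫ s in (0:ℝ)..t, |KM M t s| ≤ Real.exp (t * ∫ τ in (0:ℝ)..t, |M τ|) - 1 := by
  have hexp : 0 ≤ Real.exp (t * ∫ τ in (0:ℝ)..t, |M τ|) - 1 := by
    have : 0 ≤ ∫ τ in (0:ℝ)..t, |M τ| :=
      intervalIntegral.integral_nonneg ht fun τ _ => abs_nonneg _
    simpa using Real.one_le_exp (mul_nonneg ht this)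
  rw [intervalIntegral.integral_of_le ht]
  refine (Real.le_norm_self _).trans <| (norm_integral_le_lintegral_norm _).trans <|
    ENNReal.toReal_le_of_le_ofReal hexp ?_
  simp only [norm_abs_eq_norm, ofReal_norm]
  exact (lintegral_mono_set Ioc_subset_Icc_self).trans (lintegral_enorm_KM_le hM ht)

/-- weighted estimate for the flow kernel.  For `M` continuous on `[0,∞)`,
`λ ∈ ℝ` and `t ≥ 0`:
`∫_0^t e^{-λ(t-s)} |K_M(t,s)| ds ≤ exp(t ∫_0^t e^{-λτ}|M(τ)| dτ) − 1`. -/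
theorem KM_weighted_estimate
    (M : ℝ → ℝ) (hM : ContinuousOn M (Set.Ici 0)) (lam : ℝ) :
    ∀ t : ℝ, 0 ≤ t →
      (∫ s in (0:ℝ)..t, Real.exp (-lam * (t - s)) * |KM M t s|) ≤
        Real.exp (t * ∫ τ in (0:ℝ)..t, Real.exp (-lam * τ) * |M τ|) - 1 := by
  intro t ht
  set M₀ : ℝ → ℝ := fun x => M (max x 0)
  have hM₀ : EqOn M₀ M (Ici 0) := fun x hx => congrArg M (max_eq_left hx)
  set N : ℝ → ℝ := fun x => Real.exp (-lam * x) * M₀ x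
  have hN : Continuous N :=
    (by fun_prop : Continuous fun x => Real.exp (-lam * x)).mul
      (hM.comp_continuous (by fun_prop) fun x => le_max_right x 0)
  have hKM : EqOn (fun s => Real.exp (-lam * (t - s)) * |KM M t s|) (fun s => |KM N t s|)
      (uIcc 0 t) := fun s hs => by
    rw [uIcc_of_le ht] at hs
    simp only [N, KM_exp_mul, KM_congr hM₀ hs.2, abs_mul, Real.abs_exp]
  have hMN : EqOn (fun τ => Real.exp (-lam * τ) * |M τ|) (fun τ => |N τ|) (uIcc 0 t) :=
    fun τ hτ => by
      rw [uIcc_of_le ht] at hτ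
      simp only [N, hM₀ hτ.1, abs_mul, Real.abs_exp]
  rw [intervalIntegral.integral_congr hKM, intervalIntegral.integral_congr hMN]
  exact integral_abs_KM_le hN ht
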